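/- arXiv:1601.05311 — 2 statements merged into one kernel-verified Lean document; each statement's English description precedes it below -/
import Mathlib

section
/- For u, v ∈ H²(𝕋) and τ > 0, |⟨u, (∂ₓv)² − e^{τ∂ₓ³}(e^{−τ∂ₓ³}∂ₓv)²⟩_{L²}| ≤ c·τ·‖∂ₓ²u‖_{L²}·‖∂ₓ²v‖_{L²}² for a constant c independent of τ, u, v. -/
/-- The Airy group `e^{t∂ₓ³}` acting on Fourier coefficients by `f̂ₖ ↦ e^{-itk³} f̂ₖ`. -/
noncomputable def airy (t : ℝ) (f : ℤ → ℂ) : ℤ → ℂ :=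
  fun k => Complex.exp (-Complex.I * (t : ℂ) * (k : ℂ) ^ 3) * f k

/-- Fourier coefficients of the pointwise product: convolution of coefficients. -/
noncomputable def fconv (f g : ℤ → ℂ) : ℤ → ℂ := fun k => ∑' j : ℤ, f j * g (k - j)

/-- The derivative `∂ₓ` as the Fourier multiplier `ik`. -/
def dx (f : ℤ → ℂ) : ℤ → ℂ := fun k => Complex.I * (k : ℂ) * f k

/-- The real `L²(𝕋)` pairing `⟨f,g⟩ = ∫ fg`, in terms of Fourier coefficients. -/
noncomputable def pairing (f g : ℤ → ℂ) : ℂ := ∑' k : ℤ, f k * g (-k)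

/-- The `L²(𝕋)` norm in terms of Fourier coefficients. -/
noncomputable def l2norm (f : ℤ → ℂ) : ℝ := Real.sqrt (∑' k : ℤ, ‖f k‖ ^ 2)

/-- Membership in the Sobolev space `Hʳ(𝕋)`, in terms of Fourier coefficients. -/
def memH (r : ℝ) (f : ℤ → ℂ) : Prop :=
  Summable (fun k : ℤ => (1 + (k : ℝ) ^ 2) ^ r * ‖f k‖ ^ 2)

/-!
On the Fourier side, with `w = ∂ₓv`, the `k`-th coefficient of the commutator is
`∑ⱼ (1 - e^{-3iτkj(k-j)}) ŵⱼ ŵₖ₋ⱼ`, because `k³ - j³ - (k-j)³ = 3kj(k-j)`.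
The bound `|1 - e^{iθ}| ≤ |θ|` puts one more derivative on each factor and leaves
`3τ|k| ∑ⱼ |jŵⱼ| |(k-j)ŵₖ₋ⱼ| ≤ 3τ|k| ‖∂ₓ²v‖²` by Cauchy–Schwarz. Pairing with `u` and applying
Cauchy–Schwarz once more, now against `k²ûₖ`, gives `c = 3 (∑_{k ≠ 0} k⁻²)^{1/2}`
(in Lean the `k = 0` term of `∑' k : ℤ, ((k : ℝ) ^ 2)⁻¹` is `0⁻¹ = 0`).
-/

open Complex

lemma summable_and_tsum_mul_le_sqrt {ι : Type*} {f g : ι → ℝ} (hf : ∀ i, 0 ≤ f i)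
    (hg : ∀ i, 0 ≤ g i) (hf2 : Summable fun i => f i ^ 2) (hg2 : Summable fun i => g i ^ 2) :
    (Summable fun i => f i * g i) ∧
      ∑' i, f i * g i ≤ √(∑' i, f i ^ 2) * √(∑' i, g i ^ 2) := by
  have h := Real.summable_and_inner_le_Lp_mul_Lq_tsum_of_nonneg Real.HolderConjugate.two_two
    hf hg (by simpa only [Real.rpow_two] using hf2) (by simpa only [Real.rpow_two] using hg2)
  simp only [Real.rpow_two] at h
  simpa only [Real.sqrt_eq_rpow] using h

lemma summable_and_tsum_norm_mul_norm_sub_le {f g : ℤ → ℂ} (hf : Summable fun j => ‖f j‖ ^ 2)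
    (hg : Summable fun j => ‖g j‖ ^ 2) (k : ℤ) :
    (Summable fun j => ‖f j‖ * ‖g (k - j)‖) ∧
      ∑' j, ‖f j‖ * ‖g (k - j)‖ ≤ l2norm f * l2norm g := by
  have hg' : Summable fun j => ‖g (k - j)‖ ^ 2 :=
    (Equiv.subLeft k).summable_iff (f := fun j => ‖g j‖ ^ 2) |>.mpr hg
  have hsum : ∑' j, ‖g (k - j)‖ ^ 2 = ∑' j, ‖g j‖ ^ 2 :=
    (Equiv.subLeft k).tsum_eq fun j => ‖g j‖ ^ 2
  have h := summable_and_tsum_mul_le_sqrt (fun j => norm_nonneg (f j))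
    (fun j => norm_nonneg (g (k - j))) hf hg'
  rwa [hsum] at h

lemma norm_dx (f : ℤ → ℂ) (k : ℤ) : ‖dx f k‖ = |(k : ℝ)| * ‖f k‖ := by
  simp [dx]

lemma memH.dx {r : ℝ} {f : ℤ → ℂ} (hf : memH r f) : memH (r - 1) (dx f) := by
  refine Summable.of_nonneg_of_le (fun k => by positivity) (fun k => ?_) hf
  have hpos : (0 : ℝ) < 1 + (k : ℝ) ^ 2 := by positivity
  rw [norm_dx, mul_pow, sq_abs, Real.rpow_sub_one hpos.ne', div_mul_eq_mul_div, div_le_iff₀ hpos,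
    mul_assoc]
  exact mul_le_mul_of_nonneg_left (by nlinarith [sq_nonneg ‖f k‖]) (by positivity)

lemma memH.summable_sq {r : ℝ} {f : ℤ → ℂ} (hf : memH r f) (hr : 0 ≤ r) :
    Summable fun k => ‖f k‖ ^ 2 :=
  hf.of_nonneg_of_le (fun k => by positivity) fun k =>
    le_mul_of_one_le_left (by positivity) (Real.one_le_rpow (by nlinarith) hr)

lemma airy_fconv_airy_neg (τ : ℝ) (f g : ℤ → ℂ) (k : ℤ) :
    airy τ (fconv (airy (-τ) f) (airy (-τ) g)) k =
      ∑' j : ℤ, exp ((-(3 * τ * k * j * (k - j)) : ℝ) * I) * (f j * g (k - j)) := by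
  simp only [airy, fconv, ← tsum_mul_left]
  refine tsum_congr fun j => ?_
  rw [show ∀ a b c : ℂ, exp a * (exp b * f j * (exp c * g (k - j))) =
    exp (a + b + c) * (f j * g (k - j)) from fun a b c => by simp only [exp_add]; ring]
  congr 2
  push_cast
  ring

lemma norm_fconv_sub_airy_fconv_le (τ : ℝ) {f g : ℤ → ℂ} (hf : Summable fun j => ‖f j‖ ^ 2)
    (hg : Summable fun j => ‖g j‖ ^ 2) (hf' : Summable fun j => ‖dx f j‖ ^ 2)
    (hg' : Summable fun j => ‖dx g j‖ ^ 2) (k : ℤ) :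
    ‖fconv f g k - airy τ (fconv (airy (-τ) f) (airy (-τ) g)) k‖ ≤
      3 * |τ| * (l2norm (dx f) * l2norm (dx g)) * |(k : ℝ)| := by
  set θ : ℤ → ℝ := fun j => -(3 * τ * k * j * (k - j))
  obtain ⟨hfg, -⟩ := summable_and_tsum_norm_mul_norm_sub_le hf hg k
  obtain ⟨hdfg, hdfg_le⟩ := summable_and_tsum_norm_mul_norm_sub_le hf' hg' k
  have hdiff : fconv f g k - airy τ (fconv (airy (-τ) f) (airy (-τ) g)) k =
      ∑' j, (1 - exp (θ j * I)) * (f j * g (k - j)) := by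
    have hs : Summable fun j => f j * g (k - j) := .of_norm (by simpa only [norm_mul] using hfg)
    have hs' : Summable fun j => exp (θ j * I) * (f j * g (k - j)) :=
      .of_norm (by simpa only [norm_mul, norm_exp_ofReal_mul_I, one_mul] using hfg)
    rw [airy_fconv_airy_neg, fconv, ← hs.tsum_sub hs']
    exact tsum_congr fun j => by ring
  have hterm : ∀ j, ‖(1 - exp (θ j * I)) * (f j * g (k - j))‖ ≤
      3 * |τ| * |(k : ℝ)| * (‖dx f j‖ * ‖dx g (k - j)‖) := by
    intro j
    rw [norm_mul, norm_mul, norm_dx, norm_dx, norm_sub_rev, mul_comm (θ j : ℂ)]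
    calc _ ≤ ‖θ j‖ * (‖f j‖ * ‖g (k - j)‖) := by
          gcongr; exact Real.norm_exp_I_mul_ofReal_sub_one_le
      _ = _ := by
          simp only [θ, Real.norm_eq_abs, abs_neg, abs_mul, Int.cast_sub,
            abs_of_pos (three_pos : (0 : ℝ) < 3)]
          ring
  have hbound := hdfg.mul_left (3 * |τ| * |(k : ℝ)|)
  have hnorm : Summable fun j => ‖(1 - exp (θ j * I)) * (f j * g (k - j))‖ :=
    hbound.of_nonneg_of_le (fun _ => norm_nonneg _) hterm
  calc _ = ‖∑' j, (1 - exp (θ j * I)) * (f j * g (k - j))‖ := by rw [hdiff]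
    _ ≤ ∑' j, ‖(1 - exp (θ j * I)) * (f j * g (k - j))‖ := norm_tsum_le_tsum_norm hnorm
    _ ≤ ∑' j, 3 * |τ| * |(k : ℝ)| * (‖dx f j‖ * ‖dx g (k - j)‖) :=
        hnorm.tsum_le_tsum hterm hbound
    _ = 3 * |τ| * |(k : ℝ)| * ∑' j, ‖dx f j‖ * ‖dx g (k - j)‖ := tsum_mul_left
    _ ≤ 3 * |τ| * |(k : ℝ)| * (l2norm (dx f) * l2norm (dx g)) :=
        mul_le_mul_of_nonneg_left hdfg_le (by positivity)
    _ = _ := by ring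

lemma norm_pairing_le {u F : ℤ → ℂ} {A : ℝ} (hu : Summable fun k => ‖dx (dx u) k‖ ^ 2)
    (hF : ∀ k, ‖F k‖ ≤ A * |(k : ℝ)|) :
    ‖pairing u F‖ ≤ A * √(∑' k : ℤ, ((k : ℝ) ^ 2)⁻¹) * l2norm (dx (dx u)) := by
  have hA : 0 ≤ A := by simpa using (norm_nonneg _).trans (hF 1)
  have hinv : Summable fun k : ℤ => |(k : ℝ)|⁻¹ ^ 2 := by
    simpa only [inv_pow, sq_abs, one_div] using Real.summable_one_div_int_pow.mpr one_lt_two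
  obtain ⟨hs, hle⟩ := summable_and_tsum_mul_le_sqrt (fun k => inv_nonneg.mpr (abs_nonneg _))
    (fun k => norm_nonneg (dx (dx u) k)) hinv hu
  simp only [inv_pow, sq_abs] at hle
  have hterm : ∀ k : ℤ, ‖u k * F (-k)‖ ≤ A * (|(k : ℝ)|⁻¹ * ‖dx (dx u) k‖) := by
    intro k
    have hk := hF (-k)
    rw [Int.cast_neg, abs_neg] at hk
    rw [norm_mul, norm_dx, norm_dx]
    rcases eq_or_ne k 0 with rfl | hk0
    · simpa using mul_le_mul_of_nonneg_left hk (norm_nonneg (u 0))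
    · have : |(k : ℝ)| ≠ 0 := by positivity
      calc ‖u k‖ * ‖F (-k)‖ ≤ ‖u k‖ * (A * |(k : ℝ)|) := by gcongr
        _ = _ := by field_simp
  have hbound := hs.mul_left A
  have hnorm : Summable fun k => ‖u k * F (-k)‖ :=
    hbound.of_nonneg_of_le (fun _ => norm_nonneg _) hterm
  calc ‖pairing u F‖ ≤ ∑' k, ‖u k * F (-k)‖ := norm_tsum_le_tsum_norm hnorm
    _ ≤ ∑' k : ℤ, A * (|(k : ℝ)|⁻¹ * ‖dx (dx u) k‖) := hnorm.tsum_le_tsum hterm hbound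
    _ = A * ∑' k : ℤ, |(k : ℝ)|⁻¹ * ‖dx (dx u) k‖ := tsum_mul_left
    _ ≤ A * (√(∑' k : ℤ, ((k : ℝ) ^ 2)⁻¹) * l2norm (dx (dx u))) := by gcongr; exact hle
    _ = _ := by ring

/-- `|⟨u, (∂ₓv)² − e^{τ∂ₓ³}(e^{−τ∂ₓ³}∂ₓv)²⟩| ≤ c τ ‖∂ₓ²u‖ ‖∂ₓ²v‖²`. -/
theorem airy_square_commutator_H2 :
    ∃ c : ℝ, 0 < c ∧ ∀ (τ : ℝ), 0 < τ → ∀ u v : ℤ → ℂ,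
      memH 2 u → memH 2 v →
      ‖pairing u
          (fun k => fconv (dx v) (dx v) k
            - airy τ (fconv (airy (-τ) (dx v)) (airy (-τ) (dx v))) k)‖ ≤
        c * τ * l2norm (dx (dx u)) * l2norm (dx (dx v)) ^ 2 := by
  have hS : 0 < ∑' k : ℤ, ((k : ℝ) ^ 2)⁻¹ := by
    simpa only [one_div] using (Real.summable_one_div_int_pow.mpr one_lt_two).tsum_pos
      (fun k => by positivity) 1 (by norm_num)
  refine ⟨3 * √(∑' k : ℤ, ((k : ℝ) ^ 2)⁻¹), by positivity, fun τ hτ u v hu hv => ?_⟩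
  have hdv := hv.dx.summable_sq (by norm_num)
  have hddv := hv.dx.dx.summable_sq (by norm_num)
  calc _ ≤ 3 * |τ| * (l2norm (dx (dx v)) * l2norm (dx (dx v))) *
        √(∑' k : ℤ, ((k : ℝ) ^ 2)⁻¹) * l2norm (dx (dx u)) :=
        norm_pairing_le (hu.dx.dx.summable_sq (by norm_num))
          (norm_fconv_sub_airy_fconv_le τ hdv hdv hddv hddv)
    _ = _ := by rw [abs_of_pos hτ]; ring
end

section
/- Let f, g ∈ L²(𝕋) and define for τ, tₙ ∈ ℝ the finite quantity S := Σ_{k₁,k₂≠0, k₁+k₂≠0} [e^{−i(tₙ+τ)((k₁+k₂)³−k₁³−k₂³)} − e^{−itₙ((k₁+k₂)³−k₁³−k₂³)}]·(−3k₁k₂)^{−1}·f̂_{k₁}ĝ_{k₂}·e^{i(k₁+k₂)x}. Then S = (1/3)e^{(tₙ+τ)∂ₓ³}[(e^{−(tₙ+τ)∂ₓ³}∂ₓ⁻¹f)(e^{−(tₙ+τ)∂ₓ³}∂ₓ⁻¹g)] − (1/3)e^{tₙ∂ₓ³}[(e^{−tₙ∂ₓ³}∂ₓ⁻¹f)(e^{−tₙ∂ₓ³}∂ₓ⁻¹g)],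 where ∂ₓ⁻¹ is the Fourier multiplier (ik)⁻¹ for k ≠ 0 and 0 for k = 0, provided f̂₀ = ĝ₀ = 0 and f, g are smooth enough for the sums to converge absolutely (e.g. f, g ∈ H¹). -/
/-- `∂ₓ⁻¹`: the Fourier multiplier `(ik)⁻¹` for `k ≠ 0`, and `0` for `k = 0`. -/
noncomputable def invdx (f : ℤ → ℂ) : ℤ → ℂ :=
  fun k => if k = 0 then 0 else f k / (Complex.I * (k : ℂ))

open Complex

lemma memH.summable_norm_sq {r : ℝ} {f : ℤ → ℂ} (hr : 0 ≤ r) (hf : memH r f) :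
    Summable fun k : ℤ => ‖f k‖ ^ 2 :=
  hf.of_nonneg_of_le (fun _ => by positivity) fun k =>
    le_mul_of_one_le_left (by positivity) (Real.one_le_rpow (by nlinarith [sq_nonneg (k : ℝ)]) hr)

lemma summable_norm_mul_norm_sub {u v : ℤ → ℂ} (hu : Summable fun k : ℤ => ‖u k‖ ^ 2)
    (hv : Summable fun k : ℤ => ‖v k‖ ^ 2) (m : ℤ) :
    Summable fun j : ℤ => ‖u j‖ * ‖v (m - j)‖ := by
  have hv' : Summable fun j : ℤ => ‖v (m - j)‖ ^ 2 :=
    hv.comp_injective fun a b h => by simpa using h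
  refine (hu.add hv').of_nonneg_of_le (fun _ => by positivity) fun j => ?_
  nlinarith [sq_nonneg (‖u j‖ - ‖v (m - j)‖)]

lemma norm_invdx_le (f : ℤ → ℂ) (k : ℤ) : ‖invdx f k‖ ≤ ‖f k‖ := by
  unfold invdx
  split_ifs with hk
  · simp
  · rw [norm_div, norm_mul, norm_I, one_mul, norm_intCast]
    exact div_le_self (norm_nonneg _) (by exact_mod_cast Int.one_le_abs hk)

lemma invdx_mul_invdx (f g : ℤ → ℂ) {j k : ℤ} (hj : j ≠ 0) (hk : k ≠ 0) :
    invdx f j * invdx g k = -(f j * g k) / ((j : ℂ) * k) := by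
  have hj' : (j : ℂ) ≠ 0 := Int.cast_ne_zero.mpr hj
  have hk' : (k : ℂ) ≠ 0 := Int.cast_ne_zero.mpr hk
  simp only [invdx, hj, hk, if_false]
  field_simp
  rw [I_sq]
  ring

lemma norm_exp_neg_I_mul_intCast (t : ℝ) (n : ℤ) : ‖cexp (-I * t * n)‖ = 1 := by
  rw [norm_exp]
  simp

lemma airy_fconv_airy_neg_s14 (t : ℝ) (u v : ℤ → ℂ) (m : ℤ) :
    airy t (fconv (airy (-t) u) (airy (-t) v)) m
      = ∑' j : ℤ, cexp (-I * t * ((m : ℂ) ^ 3 - (j : ℂ) ^ 3 - ((m - j : ℤ) : ℂ) ^ 3))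
          * (u j * v (m - j)) := by
  simp only [airy, fconv, ← tsum_mul_left]
  refine tsum_congr fun j => ?_
  have hphase : cexp (-I * t * ((m : ℂ) ^ 3 - (j : ℂ) ^ 3 - ((m - j : ℤ) : ℂ) ^ 3))
      = cexp (-I * t * (m : ℂ) ^ 3) * (cexp (-I * ((-t : ℝ) : ℂ) * (j : ℂ) ^ 3)
          * cexp (-I * ((-t : ℝ) : ℂ) * ((m - j : ℤ) : ℂ) ^ 3)) := by
    rw [← exp_add, ← exp_add]
    push_cast
    ring_nf
  rw [hphase]
  ring

lemma summable_airy_fconv_summand (t : ℝ) {f g : ℤ → ℂ}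
    (hf : Summable fun k : ℤ => ‖f k‖ ^ 2) (hg : Summable fun k : ℤ => ‖g k‖ ^ 2) (m : ℤ) :
    Summable fun j : ℤ => cexp (-I * t * ((m : ℂ) ^ 3 - (j : ℂ) ^ 3 - ((m - j : ℤ) : ℂ) ^ 3))
      * (invdx f j * invdx g (m - j)) := by
  refine (summable_norm_mul_norm_sub hf hg m).of_norm_bounded fun j => ?_
  have hphase := norm_exp_neg_I_mul_intCast t (m ^ 3 - j ^ 3 - (m - j) ^ 3)
  push_cast at hphase ⊢
  rw [norm_mul, hphase, one_mul, norm_mul]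
  exact mul_le_mul (norm_invdx_le f j) (norm_invdx_le g _) (norm_nonneg _) (norm_nonneg _)

lemma resonance_summand_eq (f g : ℤ → ℂ) (t τ : ℝ) (m j : ℤ) :
    (if j ≠ 0 ∧ m - j ≠ 0 ∧ m ≠ 0 then
        (cexp (-I * ((t : ℂ) + (τ : ℂ)) *
            (((j : ℂ) + ((m - j : ℤ) : ℂ)) ^ 3 - (j : ℂ) ^ 3 - ((m - j : ℤ) : ℂ) ^ 3))
          - cexp (-I * (t : ℂ) *
            (((j : ℂ) + ((m - j : ℤ) : ℂ)) ^ 3 - (j : ℂ) ^ 3 - ((m - j : ℤ) : ℂ) ^ 3)))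
          * (-3 * (j : ℂ) * ((m - j : ℤ) : ℂ))⁻¹ * f j * g (m - j)
      else 0)
      = 1 / 3 * (cexp (-I * ((t + τ : ℝ) : ℂ) *
            ((m : ℂ) ^ 3 - (j : ℂ) ^ 3 - ((m - j : ℤ) : ℂ) ^ 3)) * (invdx f j * invdx g (m - j)))
        - 1 / 3 * (cexp (-I * t * ((m : ℂ) ^ 3 - (j : ℂ) ^ 3 - ((m - j : ℤ) : ℂ) ^ 3))
            * (invdx f j * invdx g (m - j))) := by
  by_cases hj : j = 0
  · simp [invdx, hj]
  by_cases hmj : m - j = 0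
  · simp [invdx, hmj]
  have hsum : (j : ℂ) + ((m - j : ℤ) : ℂ) = m := by push_cast; ring
  have resonance : (m : ℂ) ^ 3 - (j : ℂ) ^ 3 - ((m - j : ℤ) : ℂ) ^ 3
      = 3 * j * ((m - j : ℤ) : ℂ) * m := by push_cast; ring
  by_cases hm : m = 0
  · rw [if_neg fun h => h.2.2 hm, resonance, hm]
    simp
  rw [if_pos ⟨hj, hmj, hm⟩, hsum, invdx_mul_invdx f g hj hmj]
  have hj' : (j : ℂ) ≠ 0 := Int.cast_ne_zero.mpr hj
  have hmj' : ((m - j : ℤ) : ℂ) ≠ 0 := Int.cast_ne_zero.mpr hmj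
  push_cast
  field_simp
  ring

theorem exact_integration_identity_general (f g : ℤ → ℂ)
    (hf : memH 1 f) (hg : memH 1 g) (τ tₙ : ℝ) (m : ℤ) :
    (∑' k₁ : ℤ, if k₁ ≠ 0 ∧ m - k₁ ≠ 0 ∧ m ≠ 0 then
        (Complex.exp (-Complex.I * ((tₙ : ℂ) + (τ : ℂ)) *
            (((k₁ : ℂ) + ((m - k₁ : ℤ) : ℂ)) ^ 3 - (k₁ : ℂ) ^ 3 - ((m - k₁ : ℤ) : ℂ) ^ 3))
          - Complex.exp (-Complex.I * (tₙ : ℂ) *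
            (((k₁ : ℂ) + ((m - k₁ : ℤ) : ℂ)) ^ 3 - (k₁ : ℂ) ^ 3 - ((m - k₁ : ℤ) : ℂ) ^ 3)))
          * (-3 * (k₁ : ℂ) * ((m - k₁ : ℤ) : ℂ))⁻¹ * f k₁ * g (m - k₁)
      else 0) =
      (1 / 3) * airy (tₙ + τ)
          (fconv (airy (-(tₙ + τ)) (invdx f)) (airy (-(tₙ + τ)) (invdx g))) m
        - (1 / 3) * airy tₙ (fconv (airy (-tₙ) (invdx f)) (airy (-tₙ) (invdx g))) m := by
  have hf2 := hf.summable_norm_sq zero_le_one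
  have hg2 := hg.summable_norm_sq zero_le_one
  rw [airy_fconv_airy_neg_s14, airy_fconv_airy_neg_s14, ← tsum_mul_left, ← tsum_mul_left,
    ← ((summable_airy_fconv_summand (tₙ + τ) hf2 hg2 m).mul_left _).tsum_sub
      ((summable_airy_fconv_summand tₙ hf2 hg2 m).mul_left _)]
  exact tsum_congr (resonance_summand_eq f g tₙ τ m)

/-- Exact integration identity: the resonance sum
`Σ_{k₁,k₂≠0, k₁+k₂≠0} [e^{−i(tₙ+τ)·(…)} − e^{−itₙ·(…)}] (−3k₁k₂)⁻¹ f̂_{k₁} ĝ_{k₂} e^{i(k₁+k₂)x}`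
equals, mode by mode,
`(1/3) e^{(tₙ+τ)∂ₓ³}[(e^{−(tₙ+τ)∂ₓ³}∂ₓ⁻¹f)(e^{−(tₙ+τ)∂ₓ³}∂ₓ⁻¹g)]
  − (1/3) e^{tₙ∂ₓ³}[(e^{−tₙ∂ₓ³}∂ₓ⁻¹f)(e^{−tₙ∂ₓ³}∂ₓ⁻¹g)]`. -/
theorem exact_integration_identity (f g : ℤ → ℂ) (hf0 : f 0 = 0) (hg0 : g 0 = 0)
    (hf : memH 1 f) (hg : memH 1 g) (τ tₙ : ℝ) (m : ℤ) :
    (∑' k₁ : ℤ, if k₁ ≠ 0 ∧ m - k₁ ≠ 0 ∧ m ≠ 0 then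
        (Complex.exp (-Complex.I * ((tₙ : ℂ) + (τ : ℂ)) *
            (((k₁ : ℂ) + ((m - k₁ : ℤ) : ℂ)) ^ 3 - (k₁ : ℂ) ^ 3 - ((m - k₁ : ℤ) : ℂ) ^ 3))
          - Complex.exp (-Complex.I * (tₙ : ℂ) *
            (((k₁ : ℂ) + ((m - k₁ : ℤ) : ℂ)) ^ 3 - (k₁ : ℂ) ^ 3 - ((m - k₁ : ℤ) : ℂ) ^ 3)))
          * (-3 * (k₁ : ℂ) * ((m - k₁ : ℤ) : ℂ))⁻¹ * f k₁ * g (m - k₁)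
      else 0) =
      (1 / 3) * airy (tₙ + τ)
          (fconv (airy (-(tₙ + τ)) (invdx f)) (airy (-(tₙ + τ)) (invdx g))) m
        - (1 / 3) * airy tₙ (fconv (airy (-tₙ) (invdx f)) (airy (-tₙ) (invdx g))) m :=
  exact_integration_identity_general f g hf hg τ tₙ m
end
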